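/- Let A, B be nonsingular d×d integer matrices and let N_0 be a permuted Hermite normal form of B (so in particular B is UP-equivalent to N_0). Let S_d = ⊔_{i=1}^ℓ G(N_0) g_i be a right coset decomposition with respect to the pattern group G(N_0). Then A is UP-equivalent to B if and only if H(A · g_i^{-1}) belongs to the orbit O(N_0) = { P_g N_0 P_g^{-1} : g ∈ G(N_0) } for some i ∈ {1, ..., ℓ}. -/

import Mathlib

def IsHNF {n : ℕ} (H : Matrix (Fin n) (Fin n) ℤ) : Prop :=
  (∀ i j : Fin n, j < i → H i j = 0) ∧
  (∀ i : Fin n, 0 < H i i) ∧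
  (∀ i j : Fin n, i < j → 0 ≤ H i j ∧ H i j < H j j)

def IsHNFOf {n : ℕ} (H A : Matrix (Fin n) (Fin n) ℤ) : Prop :=
  IsHNF H ∧ ∃ U : Matrix (Fin n) (Fin n) ℤ, IsUnit U.det ∧ U * A = H

def UPEquiv {ι : Type*} [Fintype ι] [DecidableEq ι] (X Y : Matrix ι ι ℤ) : Prop :=
  ∃ U : Matrix ι ι ℤ, IsUnit U.det ∧ ∃ σ : Equiv.Perm ι, U * X = Y.submatrix id ⇑σ

/-!
Both `UPEquiv` and "`H` is the HNF of `X`" are statements about the orbits of `GL_d(ℤ)` acting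
on the left, and column permutations commute with that action. If `U A = B σ` and `V (B τ) = N₀`,
choose the coset `G(N₀) gᵢ ∋ τ⁻¹ σ`; then `ρ = τ⁻¹ σ gᵢ⁻¹ ∈ G(N₀)` and `A gᵢ⁻¹` is row
equivalent to `N₀ ρ`, hence to `P_ρ N₀ ρ`, which is again in Hermite normal form because `ρ`
only permutes the scalar diagonal blocks of `N₀`. Conversely, `H(A gᵢ⁻¹) = P_τ' N₀ P_τ'⁻¹` makes
`A gᵢ⁻¹` row equivalent to a column permutation of `B`.
-/

open Matrix

/-- `G(N₀)` is `patternGroup b (Fin.last s)`, where `b` sends an index to its diagonal block. -/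
def patternGroup {α β : Type*} (b : α → β) (c : β) : Subgroup (Equiv.Perm α) where
  carrier := {τ | (∀ x, b (τ x) = b x) ∧ ∀ x, b x = c → τ x = x}
  one_mem' := ⟨fun _ => rfl, fun _ _ => rfl⟩
  mul_mem' := by
    rintro σ τ ⟨hσb, hσc⟩ ⟨hτb, hτc⟩
    refine ⟨fun x => (hσb _).trans (hτb x), fun x hx => ?_⟩
    simp only [Equiv.Perm.coe_mul, Function.comp_apply, hτc x hx, hσc x hx]
  inv_mem' := by
    rintro τ ⟨hτb, hτc⟩
    have hinv : ∀ x, b (τ⁻¹ x) = b x := fun x => by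
      simpa using (hτb (τ⁻¹ x)).symm
    refine ⟨hinv, fun x hx => ?_⟩
    simpa using (hτc (τ⁻¹ x) ((hinv x).trans hx)).symm

section RowEquiv

variable {ι R : Type*} [Fintype ι] [DecidableEq ι] [CommRing R]

def RowEquiv (X Y : Matrix ι ι R) : Prop :=
  ∃ U : Matrix ι ι R, IsUnit U.det ∧ U * X = Y

theorem RowEquiv.symm {X Y : Matrix ι ι R} (h : RowEquiv X Y) : RowEquiv Y X := by
  obtain ⟨U, hU, rfl⟩ := h
  exact ⟨U⁻¹, isUnit_nonsing_inv_det U hU, by rw [← mul_assoc, nonsing_inv_mul U hU, one_mul]⟩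

theorem RowEquiv.trans {X Y Z : Matrix ι ι R} (hXY : RowEquiv X Y) (hYZ : RowEquiv Y Z) :
    RowEquiv X Z := by
  obtain ⟨U, hU, rfl⟩ := hXY
  obtain ⟨V, hV, rfl⟩ := hYZ
  exact ⟨V * U, by simpa only [det_mul] using hV.mul hU, mul_assoc V U X⟩

theorem RowEquiv.submatrix_id {X Y : Matrix ι ι R} (h : RowEquiv X Y) (σ : Equiv.Perm ι) :
    RowEquiv (X.submatrix id σ) (Y.submatrix id σ) := by
  obtain ⟨U, hU, rfl⟩ := h
  exact ⟨U, hU, by rw [submatrix_mul U X id id σ Function.bijective_id, submatrix_id_id]⟩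

theorem rowEquiv_submatrix_id_submatrix (X : Matrix ι ι R) (ρ π : Equiv.Perm ι) :
    RowEquiv (X.submatrix id π) (X.submatrix ρ π) :=
  ⟨ρ.permMatrix R, by simpa using (Equiv.Perm.sign ρ).isUnit.map (Int.castRingHom R),
    by rw [PEquiv.toMatrix_toPEquiv_mul, submatrix_submatrix]; rfl⟩

end RowEquiv

section HermiteNormalForm

variable {n : ℕ} {β : Type*} [PartialOrder β] {b : Fin n → β} {ρ : Equiv.Perm (Fin n)}

theorem Monotone.perm_lt_perm_iff (hb : Monotone b) (hρ : ∀ x, b (ρ x) = b x) {i j : Fin n}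
    (hij : b i ≠ b j) : ρ i < ρ j ↔ i < j := by
  have key : ∀ {i j : Fin n}, b i ≠ b j → i < j → ρ i < ρ j := fun {i j} hij hlt => by
    have hblt : b i < b j := lt_of_le_of_ne (hb hlt.le) hij
    by_contra hle
    have := hb (not_lt.mp hle)
    rw [hρ, hρ] at this
    exact hblt.not_ge this
  refine ⟨fun h => ?_, key hij⟩
  by_contra hle
  rcases (not_lt.mp hle).lt_or_eq with hlt | rfl
  · exact (key (Ne.symm hij) hlt).asymm h
  · exact lt_irrefl _ h

/-- Within a block `ρ` is invisible because the block is scalar; across blocks it preserves the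
order of the indices. -/
theorem IsHNF.submatrix_of_scalar_blocks {N : Matrix (Fin n) (Fin n) ℤ} (hN : IsHNF N)
    (hb : Monotone b) (r : β → ℤ)
    (hdiag : ∀ i j, b i = b j → N i j = if i = j then r (b i) else 0)
    (hρ : ∀ x, b (ρ x) = b x) : IsHNF (N.submatrix ρ ρ) := by
  have hblock : ∀ i j, b i = b j → N (ρ i) (ρ j) = N i j := fun i j hij => by
    rw [hdiag _ _ (by rw [hρ, hρ, hij]), hdiag _ _ hij, hρ]
    simp only [ρ.injective.eq_iff]
  obtain ⟨hlower, hpos, hupper⟩ := hN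
  refine ⟨fun i j hji => ?_, fun i => ?_, fun i j hij => ?_⟩
  · by_cases hij : b i = b j
    · exact (hblock i j hij).trans (hlower i j hji)
    · exact hlower _ _ ((hb.perm_lt_perm_iff hρ (Ne.symm hij)).mpr hji)
  · simpa only [submatrix_apply, hblock i i rfl] using hpos i
  · simp only [submatrix_apply, hblock j j rfl]
    by_cases hb' : b i = b j
    · exact hblock i j hb' ▸ hupper i j hij
    · simpa only [hblock j j rfl] using
        hupper _ _ ((hb.perm_lt_perm_iff hρ hb').mpr hij)

end HermiteNormalForm

theorem stmt11_general {d s : ℕ} (A B N₀ : Matrix (Fin d) (Fin d) ℤ)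
    (b : Fin d → Fin (s + 1)) (hbmono : Monotone b)
    (r : Fin (s + 1) → ℤ)
    (hdiag : ∀ i j : Fin d, b i = b j → N₀ i j = if i = j then r (b i) else 0)
    (hHNF : IsHNF N₀)
    (hBN : ∃ τ : Equiv.Perm (Fin d), IsHNFOf N₀ (B.submatrix id ⇑τ))
    (ℓ : ℕ) (g : Fin ℓ → Equiv.Perm (Fin d))
    (hcoset : ∀ σ : Equiv.Perm (Fin d), ∃! i : Fin ℓ,
      (∀ x, b ((σ * (g i)⁻¹) x) = b x) ∧
      (∀ x, b x = Fin.last s → (σ * (g i)⁻¹) x = x)) :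
    UPEquiv A B ↔
      ∃ i : Fin ℓ, ∃ H : Matrix (Fin d) (Fin d) ℤ,
        IsHNFOf H (A.submatrix id ⇑(g i)⁻¹) ∧
        ∃ τ : Equiv.Perm (Fin d),
          (∀ x, b (τ x) = b x) ∧ (∀ x, b x = Fin.last s → τ x = x) ∧
          H = N₀.submatrix ⇑τ⁻¹ ⇑τ⁻¹ := by
  obtain ⟨τ, -, hBτ⟩ := hBN
  replace hBτ : RowEquiv (B.submatrix id τ) N₀ := hBτ
  constructor
  · rintro ⟨U, hU, σ, hUA⟩
    obtain ⟨i, hρ, -⟩ := hcoset (τ⁻¹ * σ)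
    set ρ := τ⁻¹ * σ * (g i)⁻¹
    have hcols : (B.submatrix id σ).submatrix id ⇑(g i)⁻¹ = (B.submatrix id τ).submatrix id ρ := by
      simp only [submatrix_submatrix, Function.comp_id, ← Equiv.Perm.coe_mul, ρ]
      group
    have hA : RowEquiv (A.submatrix id ⇑(g i)⁻¹) (N₀.submatrix ρ ρ) :=
      (RowEquiv.submatrix_id ⟨U, hU, hUA⟩ _).trans <| hcols ▸
        (hBτ.submatrix_id ρ).trans (rowEquiv_submatrix_id_submatrix N₀ ρ ρ)
    obtain ⟨hρb, hρc⟩ := inv_mem (show ρ ∈ patternGroup b (Fin.last s) from hρ)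
    exact ⟨i, _, ⟨hHNF.submatrix_of_scalar_blocks hbmono r hdiag hρ.1, hA⟩, ρ⁻¹, hρb, hρc,
      by rw [inv_inv]⟩
  · rintro ⟨i, H, ⟨-, hAH⟩, τ', -, -, rfl⟩
    have hA : RowEquiv (A.submatrix id ⇑(g i)⁻¹) ((B.submatrix id τ).submatrix id ⇑τ'⁻¹) :=
      RowEquiv.trans hAH <| (rowEquiv_submatrix_id_submatrix N₀ _ _).symm.trans
        (hBτ.submatrix_id _).symm
    obtain ⟨U, hU, hUA⟩ := hA.submatrix_id (g i)
    refine ⟨U, hU, τ * τ'⁻¹ * g i, ?_⟩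
    simpa [submatrix_submatrix] using hUA

/-- Coset criterion for UP-equivalence via a permuted Hermite normal form `N₀` of `B`.
The block structure of `N₀ ∈ M(r, m)` is encoded by a monotone surjection
`b : Fin d → Fin (s+1)` (consecutive blocks), with `i`-th diagonal block `r i • I` and
`r` strictly increasing and positive.  The pattern group `G(N₀)` consists of the
permutations preserving each block and fixing the last block pointwise.  Given a right
coset decomposition `S_d = ⨆ G(N₀) gᵢ`, we have `A ≃_UP B` iff `H(A ⋅ gᵢ⁻¹)` lies in the
orbit `{P_τ N₀ P_τ⁻¹ : τ ∈ G(N₀)}` for some `i`. -/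
theorem stmt11 {d s : ℕ} (A B N₀ : Matrix (Fin d) (Fin d) ℤ)
    (hA : A.det ≠ 0) (hB : B.det ≠ 0)
    (b : Fin d → Fin (s + 1)) (hbmono : Monotone b) (hbsurj : Function.Surjective b)
    (r : Fin (s + 1) → ℤ) (hrpos : ∀ i, 0 < r i) (hrmono : StrictMono r)
    (hdiag : ∀ i j : Fin d, b i = b j → N₀ i j = if i = j then r (b i) else 0)
    (hlow : ∀ i j : Fin d, b j < b i → N₀ i j = 0)
    (hHNF : IsHNF N₀)
    (hBN : ∃ τ : Equiv.Perm (Fin d), IsHNFOf N₀ (B.submatrix id ⇑τ))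
    (ℓ : ℕ) (g : Fin ℓ → Equiv.Perm (Fin d))
    (hcoset : ∀ σ : Equiv.Perm (Fin d), ∃! i : Fin ℓ,
      (∀ x, b ((σ * (g i)⁻¹) x) = b x) ∧
      (∀ x, b x = Fin.last s → (σ * (g i)⁻¹) x = x)) :
    UPEquiv A B ↔
      ∃ i : Fin ℓ, ∃ H : Matrix (Fin d) (Fin d) ℤ,
        IsHNFOf H (A.submatrix id ⇑(g i)⁻¹) ∧
        ∃ τ : Equiv.Perm (Fin d),
          (∀ x, b (τ x) = b x) ∧ (∀ x, b x = Fin.last s → τ x = x) ∧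
          H = N₀.submatrix ⇑τ⁻¹ ⇑τ⁻¹ :=
  stmt11_general A B N₀ b hbmono r hdiag hHNF hBN ℓ g hcoset
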